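/- arXiv:1911.10790 — 3 statements merged into one kernel-verified Lean document; each statement's English description precedes it below -/
import Mathlib

section
/- (Interior ball condition.) If x ∈ U is a point where u is differentiable and y := ∇u(x), then Ω ∩ B_{|x−y|}(y) ⊂ U. Likewise, if y ∈ V is a point where v is differentiable and x := ∇v(y), then Ω* ∩ B_{|x−y|}(x) ⊂ V. -/
open MeasureTheory Set Metric Filter Topology NNReal InnerProductSpace

noncomputable section

abbrev Euc (n : ℕ) := EuclideanSpace ℝ (Fin n)

/-- The subdifferential of a function `u : ℝⁿ → ℝ` at `x`. -/
def subdiff {n : ℕ} (u : Euc n → ℝ) (x : Euc n) : Set (Euc n) :=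
  {p | ∀ z, u x + ⟪p, z - x⟫_ℝ ≤ u z}

/-- The last coordinate `xⁿ` of a point of `ℝⁿ` (junk value `0` if `n = 0`). -/
def lastCoord {n : ℕ} (y : Euc n) : ℝ :=
  if h : 0 < n then y ⟨n - 1, Nat.sub_lt h one_pos⟩ else 0

/-- The first `n - 1` coordinates `x'` of a point of `ℝⁿ`. -/
def initCoords {n : ℕ} (y : Euc n) : Euc (n - 1) :=
  WithLp.toLp 2 (fun i => y (Fin.castLE (Nat.sub_le n 1) i))

/-- The `n`-th standard basis vector `eₙ` of `ℝⁿ` (junk value `0` if `n = 0`). -/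
def en (n : ℕ) : Euc n :=
  if h : 0 < n then EuclideanSpace.single ⟨n - 1, Nat.sub_lt h one_pos⟩ 1 else 0

/-- Inside the ball `B_r(x₀)`, and in the orthonormal coordinates given by the linear
isometry `φ` centred at `x₀`, the set `S` coincides with the graph `{xⁿ = γ(x')}`. -/
def IsGraphNear {n : ℕ} (S : Set (Euc n)) (x₀ : Euc n) (r : ℝ)
    (φ : Euc n ≃ₗᵢ[ℝ] Euc n) (γ : Euc (n - 1) → ℝ) : Prop :=
  ∀ x ∈ ball x₀ r,
    (x ∈ S ↔ lastCoord (φ (x - x₀)) = γ (initCoords (φ (x - x₀))))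

/-- Near `x₀`, inside `Ω`, the set `S` is the graph of a `C¹` function of `n - 1`
variables, in suitable orthonormal coordinates. -/
def C1GraphAt {n : ℕ} (S Ω : Set (Euc n)) (x₀ : Euc n) : Prop :=
  ∃ r > 0, ball x₀ r ⊆ Ω ∧ ∃ (φ : Euc n ≃ₗᵢ[ℝ] Euc n) (γ : Euc (n - 1) → ℝ),
    ContDiff ℝ 1 γ ∧ IsGraphNear S x₀ r φ γ

/-- Near `x₀`, inside `Ω`, the set `S` is the graph of a `C¹` function of `n - 1`
variables whose gradient is `α`-Hölder continuous, in suitable orthonormal coordinates. -/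
def C1AlphaGraphAt {n : ℕ} (S Ω : Set (Euc n)) (α : ℝ) (x₀ : Euc n) : Prop :=
  ∃ r > 0, ball x₀ r ⊆ Ω ∧ ∃ (φ : Euc n ≃ₗᵢ[ℝ] Euc n) (γ : Euc (n - 1) → ℝ),
    ContDiff ℝ 1 γ ∧
    (∃ C : ℝ≥0, HolderWith C α.toNNReal fun z => fderiv ℝ γ z) ∧
    IsGraphNear S x₀ r φ γ

/-- Near `x₀`, inside `Ω`, the set `S` is the graph of a `C²` function of `n - 1`
variables whose second derivatives are `α`-Hölder continuous. -/
def C2AlphaGraphAt {n : ℕ} (S Ω : Set (Euc n)) (α : ℝ) (x₀ : Euc n) : Prop :=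
  ∃ r > 0, ball x₀ r ⊆ Ω ∧ ∃ (φ : Euc n ≃ₗᵢ[ℝ] Euc n) (γ : Euc (n - 1) → ℝ),
    ContDiff ℝ 2 γ ∧
    (∃ C : ℝ≥0, HolderWith C α.toNNReal fun z => fderiv ℝ (fun w => fderiv ℝ γ w) z) ∧
    IsGraphNear S x₀ r φ γ

/-- `Ω` has a `C^{1,1}` boundary, locally a graph on scale `D⁻¹` of a `C¹` function
whose gradient is `D`-Lipschitz. -/
def HasC11BoundaryWith {n : ℕ} (Ω : Set (Euc n)) (D : ℝ) : Prop :=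
  ∀ x₀ ∈ frontier Ω, ∃ r : ℝ, D⁻¹ ≤ r ∧
    ∃ (φ : Euc n ≃ₗᵢ[ℝ] Euc n) (γ : Euc (n - 1) → ℝ),
      ContDiff ℝ 1 γ ∧ LipschitzWith (Real.toNNReal D) (fun z => fderiv ℝ γ z) ∧
      IsGraphNear (frontier Ω) x₀ r φ γ

/-- `Ω` has a `C^{1,1}` boundary. -/
def HasC11Boundary {n : ℕ} (Ω : Set (Euc n)) : Prop :=
  ∃ D > 0, HasC11BoundaryWith Ω D

end


noncomputable section

lemma subgrad_ineq {n : ℕ} {u : Euc n → ℝ} (hu : ConvexOn ℝ univ u) {x : Euc n}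
    (hd : DifferentiableAt ℝ u x) (z : Euc n) :
    u x + ⟪gradient u x, z - x⟫_ℝ ≤ u z := by
  have hgrad : HasFDerivAt u (InnerProductSpace.toDual ℝ (Euc n) (gradient u x)) x := by
    rw [← hasGradientAt_iff_hasFDerivAt]
    exact hd.hasGradientAt
  have hcurve : HasDerivAt (fun t : ℝ => x + t • (z - x)) (z - x) 0 := by
    simpa using ((hasDerivAt_id (0:ℝ)).smul_const (z - x)).const_add x
  have hg0 : HasDerivAt (fun t : ℝ => u (x + t • (z - x))) (⟪gradient u x, z - x⟫_ℝ) 0 := by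
    have h1 : HasFDerivAt u (InnerProductSpace.toDual ℝ (Euc n) (gradient u x))
        ((fun t : ℝ => x + t • (z - x)) 0) := by simpa using hgrad
    have := h1.comp_hasDerivAt 0 hcurve
    simpa [InnerProductSpace.toDual_apply_apply, Function.comp_def] using this
  have hgconv : ConvexOn ℝ univ (fun t : ℝ => u (x + t • (z - x))) := by
    have := hu.comp_affineMap (AffineMap.lineMap x z : ℝ →ᵃ[ℝ] Euc n)
    have he : (fun t : ℝ => u (x + t • (z - x))) = u ∘ (AffineMap.lineMap x z) := by
      funext t; simp [AffineMap.lineMap_apply, add_comm]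
    rw [he]
    simpa using this
  have hs := hgconv.le_slope_of_hasDerivAt (mem_univ (0:ℝ)) (mem_univ (1:ℝ)) zero_lt_one hg0
  have hsl : slope (fun t : ℝ => u (x + t • (z - x))) 0 1 = u z - u x := by
    simp [slope_def_field]
  rw [hsl] at hs
  linarith

/-- Key lemma: if `u` is convex, differentiable at `x`, and `u x > h x`, then
`u z > h z` for all `z` in the open ball centred at `∇u(x)` of radius `|x - ∇u(x)|`. -/
lemma key_ball {n : ℕ} {u : Euc n → ℝ} {lam0 : ℝ} (hu : ConvexOn ℝ univ u) {x : Euc n}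
    (hd : DifferentiableAt ℝ u x) (hx : (‖x‖ ^ 2 - lam0) / 2 < u x) {z : Euc n}
    (hz : z ∈ ball (gradient u x) (dist x (gradient u x))) :
    (‖z‖ ^ 2 - lam0) / 2 < u z := by
  set y := gradient u x with hy
  have hsub : u x + ⟪y, z - x⟫_ℝ ≤ u z := subgrad_ineq hu hd z
  by_contra hcon
  push_neg at hcon
  -- from u z ≤ h z and h x < u x we derive ‖x - y‖² < ‖z - y‖²
  have hlt : ‖x - y‖ ^ 2 < ‖z - y‖ ^ 2 := by
    have h1 : ‖x - y‖ ^ 2 = ‖x‖ ^ 2 - 2 * ⟪x, y⟫_ℝ + ‖y‖ ^ 2 := norm_sub_sq_real x y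
    have h2 : ‖z - y‖ ^ 2 = ‖z‖ ^ 2 - 2 * ⟪z, y⟫_ℝ + ‖y‖ ^ 2 := norm_sub_sq_real z y
    have h3 : ⟪y, z - x⟫_ℝ = ⟪y, z⟫_ℝ - ⟪y, x⟫_ℝ := inner_sub_right y z x
    have h4 : ⟪y, z⟫_ℝ = ⟪z, y⟫_ℝ := (real_inner_comm z y)
    have h5 : ⟪y, x⟫_ℝ = ⟪x, y⟫_ℝ := (real_inner_comm x y)
    nlinarith
  have hball : dist z y < dist x y := mem_ball.mp hz
  rw [dist_eq_norm, dist_eq_norm] at hball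
  have := lt_of_pow_lt_pow_left₀ 2 (norm_nonneg (z - y)) hlt
  linarith

end

/-- (Interior ball condition, Lemma 2.2.) -/
theorem interior_ball_condition
    {n : ℕ} (hn : 2 ≤ n)
    (Ω Ωs : Set (Euc n))
    (hΩo : IsOpen Ω) (hΩso : IsOpen Ωs)
    (hΩb : Bornology.IsBounded Ω) (hΩsb : Bornology.IsBounded Ωs)
    (hΩc : Convex ℝ Ω) (hΩsc : Convex ℝ Ωs)
    (hΩne : Ω.Nonempty) (hΩsne : Ωs.Nonempty)
    (hsep : ∃ (e : Euc n) (c : ℝ), ‖e‖ = 1 ∧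
      (∀ x ∈ Ω, ⟪x, e⟫_ℝ < c) ∧ (∀ y ∈ Ωs, c < ⟪y, e⟫_ℝ))
    (lam : ℝ) (hlam : 1 ≤ lam)
    (f g : Euc n → ℝ) (hfmeas : Measurable f) (hgmeas : Measurable g)
    (hf : ∀ x ∈ Ω, lam⁻¹ ≤ f x ∧ f x ≤ lam) (hf0 : ∀ x ∉ Ω, f x = 0)
    (hg : ∀ y ∈ Ωs, lam⁻¹ ≤ g y ∧ g y ≤ lam) (hg0 : ∀ y ∉ Ωs, g y = 0)
    (m : ℝ) (hm : 0 < m)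
    (hmf : m ≤ ∫ x in Ω, f x) (hmg : m ≤ ∫ y in Ωs, g y)
    (lam0 : ℝ) (u v : Euc n → ℝ)
    (hu : ConvexOn ℝ univ u) (hv : ConvexOn ℝ univ v)
    (hcon : ∀ x y, ⟪x, y⟫_ℝ ≤ u x + v y)
    (huh : ∀ x, (‖x‖ ^ 2 - lam0) / 2 ≤ u x)
    (hvh : ∀ y, (‖y‖ ^ 2 - lam0) / 2 ≤ v y)
    (hmin : ∀ ψ φ : Euc n → ℝ,
      (∀ x y, ⟪x, y⟫_ℝ ≤ ψ x + φ y) →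
      (∀ x, (‖x‖ ^ 2 - lam0) / 2 ≤ ψ x) →
      (∀ y, (‖y‖ ^ 2 - lam0) / 2 ≤ φ y) →
      Integrable (fun x => ψ x * f x) → Integrable (fun y => φ y * g y) →
      (∫ x, u x * f x) + (∫ y, v y * g y) ≤ (∫ x, ψ x * f x) + (∫ y, φ y * g y))
    (U V : Set (Euc n))
    (hUdef : U = {x ∈ Ω | (‖x‖ ^ 2 - lam0) / 2 < u x})
    (hVdef : V = {y ∈ Ωs | (‖y‖ ^ 2 - lam0) / 2 < v y})
    (hUm : (∫ x in U, f x) = m)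
    (hudiff : ∀ x ∈ U, DifferentiableAt ℝ u x)
    (hpush : Measure.map (fun x => gradient u x)
        ((volume.restrict U).withDensity fun x => ENNReal.ofReal (f x)) =
      (volume.restrict V).withDensity fun y => ENNReal.ofReal (g y)) :
    (∀ x ∈ U, DifferentiableAt ℝ u x →
      Ω ∩ ball (gradient u x) (dist x (gradient u x)) ⊆ U) ∧
    (∀ y ∈ V, DifferentiableAt ℝ v y →
      Ωs ∩ ball (gradient v y) (dist (gradient v y) y) ⊆ V) := by
  constructor
  · intro x hxU hdx z hzmem
    obtain ⟨hzΩ, hzball⟩ := hzmem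
    rw [hUdef] at hxU ⊢
    exact ⟨hzΩ, key_ball hu hdx hxU.2 hzball⟩
  · intro y hyV hdy z hzmem
    obtain ⟨hzΩ, hzball⟩ := hzmem
    rw [hVdef] at hyV ⊢
    refine ⟨hzΩ, key_ball hv hdy hyV.2 ?_⟩
    rwa [dist_comm] at hzball
end

section
/- Let x ∈ ℝⁿ with ∂u(x) ∩ V₁ ≠ ∅, and let x̃ = x + z where z ≠ 0 and z·eₙ ≤ −√(1 − α²)|z|. Then ∂u(x̃) ∩ V₂ = ∅. In other words, the set {x : ∂u(x) ∩ V₁ ≠ ∅} extends along the closed downward cone {z : z·eₙ ≤ −√(1−α²)|z|} without ever acquiring a subgradient in V₂. -/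
open MeasureTheory Set Metric Filter Topology NNReal InnerProductSpace

set_option maxHeartbeats 1000000 in
/-- If `∂u(x)` meets `V₁` and `x̃ = x + z` with `z` in the closed
downward cone `{z : z·eₙ ≤ −√(1−α²)|z|}`, `z ≠ 0`, then `∂u(x̃)` does not meet `V₂`. -/
theorem subdiff_avoids_V2_along_cone
    {n : ℕ} (hn : 0 < n) (u : Euc n → ℝ) (hu : ConvexOn ℝ univ u)
    (V₁ V₂ : Set (Euc n)) (α : ℝ) (hα : α ∈ Set.Ioo (0 : ℝ) 1)
    (hsep : ∀ y₁ ∈ V₁, ∀ y₂ ∈ V₂, y₂ ≠ y₁ ∧ α * ‖y₂ - y₁‖ < ⟪y₂ - y₁, en n⟫_ℝ)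
    (x z : Euc n) (hz : z ≠ 0)
    (hzc : ⟪z, en n⟫_ℝ ≤ -Real.sqrt (1 - α ^ 2) * ‖z‖)
    (hx : (subdiff u x ∩ V₁).Nonempty) :
    subdiff u (x + z) ∩ V₂ = ∅ := by
  obtain ⟨p₁, hp₁u, hp₁V⟩ := hx
  rw [Set.eq_empty_iff_forall_notMem]
  rintro p₂ ⟨hp₂u, hp₂V⟩
  obtain ⟨hne, hsep'⟩ := hsep p₁ hp₁V p₂ hp₂V
  set e := en n with he_def
  have he : ‖e‖ = 1 := by
    simp only [he_def, en, dif_pos hn]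
    rw [EuclideanSpace.norm_single]
    norm_num
  set y := p₂ - p₁ with hy_def
  -- monotonicity of the subdifferential
  have hmono : (0:ℝ) ≤ ⟪y, z⟫_ℝ := by
    have h1 := hp₁u (x + z)
    have h2 := hp₂u x
    have e1 : x + z - x = z := by abel
    have e2 : x - (x + z) = -z := by abel
    rw [e1] at h1
    rw [e2, inner_neg_right] at h2
    rw [hy_def, inner_sub_left]
    linarith
  have hy0 : y ≠ 0 := sub_ne_zero.mpr hne
  have hA : (0:ℝ) < ‖y‖ := norm_pos_iff.mpr hy0
  have hB : (0:ℝ) < ‖z‖ := norm_pos_iff.mpr hz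
  set a := ⟪y, e⟫_ℝ with ha_def
  set b := ⟪z, e⟫_ℝ with hb_def
  set s := Real.sqrt (1 - α ^ 2) with hs_def
  have hs0 : 0 ≤ s := Real.sqrt_nonneg _
  have hs2 : s ^ 2 = 1 - α ^ 2 := by
    rw [hs_def, Real.sq_sqrt]
    nlinarith [hα.1, hα.2]
  have hspos : 0 < s := by
    rw [hs_def]
    apply Real.sqrt_pos.mpr
    nlinarith [hα.1, hα.2]
  set y' := y - a • e with hy'_def
  set z' := z - b • e with hz'_def
  have hee : ⟪e, e⟫_ℝ = 1 := by
    rw [real_inner_self_eq_norm_sq, he]; norm_num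
  have hinner : ⟪y, z⟫_ℝ = a * b + ⟪y', z'⟫_ℝ := by
    rw [hy'_def, hz'_def]
    simp only [inner_sub_left, inner_sub_right, real_inner_smul_left,
      real_inner_smul_right, hee, real_inner_comm z e, ← hb_def, ← ha_def]
    ring
  have hny' : ‖y'‖ ^ 2 = ‖y‖ ^ 2 - a ^ 2 := by
    rw [← real_inner_self_eq_norm_sq, ← real_inner_self_eq_norm_sq, hy'_def]
    simp only [inner_sub_left, inner_sub_right, real_inner_smul_left,
      real_inner_smul_right, hee, real_inner_comm y e, ← ha_def]
    ring
  have hnz' : ‖z'‖ ^ 2 = ‖z‖ ^ 2 - b ^ 2 := by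
    rw [← real_inner_self_eq_norm_sq, ← real_inner_self_eq_norm_sq, hz'_def]
    simp only [inner_sub_left, inner_sub_right, real_inner_smul_left,
      real_inner_smul_right, hee, real_inner_comm z e, ← hb_def]
    ring
  have hCS : ⟪y', z'⟫_ℝ ≤ ‖y'‖ * ‖z'‖ := real_inner_le_norm y' z'
  have ha1 : α * ‖y‖ < a := hsep'
  have hb1 : b ≤ -s * ‖z‖ := hzc
  -- bounds on the orthogonal parts
  have hy'le : ‖y'‖ ≤ s * ‖y‖ := by
    have ha2 : (α * ‖y‖) ^ 2 < a ^ 2 :=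
      pow_lt_pow_left₀ ha1 (mul_nonneg hα.1.le hA.le) two_ne_zero
    have h1 : ‖y'‖ ^ 2 ≤ (s * ‖y‖) ^ 2 := by
      rw [hny']
      nlinarith [ha2, hs2]
    exact le_of_pow_le_pow_left₀ two_ne_zero (mul_nonneg hs0 hA.le) h1
  have hz'le : ‖z'‖ ≤ α * ‖z‖ := by
    have hb2 : s * ‖z‖ ≤ -b := by linarith
    have hb3 : (s * ‖z‖) ^ 2 ≤ b ^ 2 := by
      have := pow_le_pow_left₀ (mul_nonneg hs0 hB.le) hb2 2
      simpa [neg_pow] using this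
    have h1 : ‖z'‖ ^ 2 ≤ (α * ‖z‖) ^ 2 := by
      rw [hnz']
      nlinarith [hb3, hs2]
    exact le_of_pow_le_pow_left₀ two_ne_zero (mul_nonneg hα.1.le hB.le) h1
  have hfinal : ⟪y, z⟫_ℝ < 0 := by
    rw [hinner]
    have hab : a * b < -(α * ‖y‖) * (s * ‖z‖) := by
      have : 0 < s * ‖z‖ := mul_pos hspos hB
      nlinarith [mul_pos hα.1 hA]
    have : ⟪y', z'⟫_ℝ ≤ (s * ‖y‖) * (α * ‖z‖) := by
      calc ⟪y', z'⟫_ℝ ≤ ‖y'‖ * ‖z'‖ := hCS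
        _ ≤ (s * ‖y‖) * (α * ‖z‖) := by
            apply mul_le_mul hy'le hz'le (norm_nonneg _)
            exact mul_nonneg hs0 hA.le
    nlinarith
  linarith
end

section
/- Let U₁ ⊆ U be nonempty and bounded, and suppose that for every x ∈ U₁, every y ∈ U with yⁿ ≤ xⁿ − L|y' − x'| belongs to U₁ (i.e. U₁ absorbs, within U, the downward cone of slope L at each of its points). Then there exists an L-Lipschitz function φ : ℝ^{n−1} → ℝ such that {y ∈ U : yⁿ < φ(y')} ⊆ U₁ ⊆ {y ∈ U : yⁿ ≤ φ(y')}. -/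
open MeasureTheory Set Metric Filter Topology NNReal InnerProductSpace

/-- A nonempty bounded subset `U₁` of `U` which absorbs, within `U`, the
downward cone of slope `L` at each of its points is the subgraph, within `U`, of an
`L`-Lipschitz function. -/
theorem subgraph_of_cone_absorbing
    {n : ℕ} (hn : 2 ≤ n) (U U₁ : Set (Euc n)) (L : ℝ) (hL : 0 < L)
    (hU₁U : U₁ ⊆ U) (hne : U₁.Nonempty) (hbd : Bornology.IsBounded U₁)
    (habs : ∀ x ∈ U₁, ∀ y ∈ U,
      lastCoord y ≤ lastCoord x - L * dist (initCoords y) (initCoords x) → y ∈ U₁) :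
    ∃ φ : Euc (n - 1) → ℝ, LipschitzWith (Real.toNNReal L) φ ∧
      {y ∈ U | lastCoord y < φ (initCoords y)} ⊆ U₁ ∧
      U₁ ⊆ {y ∈ U | lastCoord y ≤ φ (initCoords y)} := by
  obtain ⟨C, hC⟩ := hbd.exists_norm_le
  have hnpos : 0 < n := by omega
  have hlast : ∀ x : Euc n, lastCoord x ≤ ‖x‖ := by
    intro x
    rw [lastCoord, dif_pos hnpos]
    set i : Fin n := ⟨n - 1, Nat.sub_lt hnpos one_pos⟩
    have h1 : x i = ⟪EuclideanSpace.single i (1:ℝ), x⟫_ℝ := by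
      rw [EuclideanSpace.inner_single_left]; simp
    have h2 := abs_real_inner_le_norm (EuclideanSpace.single i (1:ℝ)) x
    rw [EuclideanSpace.norm_single] at h2
    simp only [norm_one, one_mul] at h2
    calc x i ≤ |x i| := le_abs_self _
    _ = |⟪EuclideanSpace.single i (1:ℝ), x⟫_ℝ| := by rw [h1]
    _ ≤ ‖x‖ := h2
  set f : Euc (n-1) → Euc n → ℝ := fun z x => lastCoord x - L * dist z (initCoords x) with hf
  set φ : Euc (n-1) → ℝ := fun z => sSup (f z '' U₁) with hφ
  have hbdd : ∀ z, BddAbove (f z '' U₁) := by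
    intro z
    refine ⟨C, ?_⟩
    rintro _ ⟨x, hx, rfl⟩
    have h1 := hlast x
    have h2 := hC x hx
    have h3 : 0 ≤ L * dist z (initCoords x) := mul_nonneg hL.le dist_nonneg
    simp only [hf]; linarith
  have hne' : ∀ z, (f z '' U₁).Nonempty := fun z => hne.image _
  have key : ∀ z w : Euc (n-1), φ z ≤ φ w + L * dist z w := by
    intro z w
    refine csSup_le ((hne' z)) ?_
    rintro _ ⟨x, hx, rfl⟩
    have h1 : f z x ≤ f w x + L * dist z w := by
      have htri : dist w (initCoords x) ≤ dist w z + dist z (initCoords x) := dist_triangle _ _ _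
      have := mul_le_mul_of_nonneg_left htri hL.le
      simp only [hf]
      rw [dist_comm w z] at this
      linarith
    have h2 : f w x ≤ φ w := le_csSup (hbdd w) ⟨x, hx, rfl⟩
    linarith
  refine ⟨φ, ?_, ?_, ?_⟩
  · refine LipschitzWith.of_dist_le_mul fun z w => ?_
    rw [Real.dist_eq, Real.coe_toNNReal L hL.le, abs_sub_le_iff]
    have h1 := key z w
    have h2 := key w z
    rw [dist_comm w z] at h2
    constructor <;> linarith
  · rintro y ⟨hyU, hy⟩
    obtain ⟨_, ⟨x, hx, rfl⟩, hlt⟩ := exists_lt_of_lt_csSup (hne' _) hy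
    exact habs x hx y hyU (by simp only [hf] at hlt; linarith)
  · intro y hy
    refine ⟨hU₁U hy, ?_⟩
    have : f (initCoords y) y ≤ φ (initCoords y) := le_csSup (hbdd _) ⟨y, hy, rfl⟩
    simp only [hf, dist_self, mul_zero, sub_zero] at this
    exact this
end
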